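/- Let (Σ, G, Γ) be a Γ-graded discrete R-twist over an ample Hausdorff groupoid G. For each nonzero homogeneous element g_γ ∈ A_R(G; Σ)_γ, there exists a compact open bisection B of Σ contained in Σ_γ such that f = 1̃_{B⁻¹} * g_γ is a nonzero element of A_R(G_ε; Σ_ε) whose support meets Σ⁽⁰⁾, and indeed supp(f) ⊆ Σ_ε. -/

import Mathlib

open Set Function TopologicalSpace Classical
noncomputable section

universe u v w

/-- An étale topological groupoid, encoded with total operations:
`mul a b` is only meaningful when `src a = rng b`. -/
structure EtaleGroupoid (G : Type u) [TopologicalSpace G] where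
  mul : G → G → G
  inv : G → G
  src : G → G
  rng : G → G
  rng_mul_self : ∀ g, mul (rng g) g = g
  mul_src_self : ∀ g, mul g (src g) = g
  src_inv : ∀ g, src (inv g) = rng g
  rng_inv : ∀ g, rng (inv g) = src g
  inv_inv : ∀ g, inv (inv g) = g
  inv_mul_self : ∀ g, mul (inv g) g = src g
  mul_inv_self : ∀ g, mul g (inv g) = rng g
  mul_assoc' : ∀ a b c, src a = rng b → src b = rng c →
    mul (mul a b) c = mul a (mul b c)
  src_mul : ∀ a b, src a = rng b → src (mul a b) = src b
  rng_mul : ∀ a b, src a = rng b → rng (mul a b) = rng a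
  continuous_inv : Continuous inv
  continuousOn_mul :
    ContinuousOn (fun p : G × G => mul p.1 p.2) {p : G × G | src p.1 = rng p.2}
  isLocalHomeomorph_src : IsLocalHomeomorph src

namespace EtaleGroupoid

variable {G : Type u} [TopologicalSpace G] (𝒢 : EtaleGroupoid G)

/-- The unit space `G⁽⁰⁾`. -/
def unitSpace : Set G := Set.range 𝒢.src

/-- The isotropy bundle `Iso(G) = {γ : r γ = s γ}`. -/
def iso : Set G := {g | 𝒢.rng g = 𝒢.src g}

/-- The isotropy group `Gᵤᵘ` at a unit `u`. -/
def isoAt (u : G) : Set G := {g | 𝒢.rng g = u ∧ 𝒢.src g = u}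

/-- `U` is a bisection: `src` and `rng` are injective on `U`. -/
def IsBisection (U : Set G) : Prop := Set.InjOn 𝒢.src U ∧ Set.InjOn 𝒢.rng U

/-- `U` is a compact open bisection. -/
def IsCOB (U : Set G) : Prop := IsCompact U ∧ IsOpen U ∧ 𝒢.IsBisection U

/-- Pointwise inverse of a set. -/
def setInv (U : Set G) : Set G := 𝒢.inv '' U

/-- Pointwise product of two sets (only composable products). -/
def setMul (U V : Set G) : Set G :=
  {g | ∃ a ∈ U, ∃ b ∈ V, 𝒢.src a = 𝒢.rng b ∧ g = 𝒢.mul a b}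

/-- `H` is a subgroupoid of `G`. -/
def IsSubgroupoid (H : Set G) : Prop :=
  (∀ a ∈ H, 𝒢.inv a ∈ H) ∧
  (∀ a ∈ H, ∀ b ∈ H, 𝒢.src a = 𝒢.rng b → 𝒢.mul a b ∈ H) ∧
  (∀ a ∈ H, 𝒢.src a ∈ H)

/-- The groupoid is effective: the interior of the isotropy is the unit space. -/
def Effective : Prop := interior 𝒢.iso = 𝒢.unitSpace

/-- A continuous (i.e. locally constant) `Rˣ`-valued 2-cocycle on `G`. -/
def IsCocycle {R : Type w} [CommRing R] (c : G → G → Rˣ) : Prop :=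
  IsLocallyConstant (fun p : {p : G × G // 𝒢.src p.1 = 𝒢.rng p.2} => c p.1.1 p.1.2) ∧
  (∀ a b d, 𝒢.src a = 𝒢.rng b → 𝒢.src b = 𝒢.rng d →
    c a b * c (𝒢.mul a b) d = c b d * c a (𝒢.mul b d)) ∧
  (∀ g, c (𝒢.rng g) g = 1 ∧ c g (𝒢.src g) = 1)

/-- Membership in the (cocycle-twisted) Steinberg algebra `A_R(G)`:
locally constant, compactly supported functions `G → R`. -/
def MemSt {R : Type w} [CommRing R] (f : G → R) : Prop :=
  IsLocallyConstant f ∧ ∃ K : Set G, IsCompact K ∧ Function.support f ⊆ K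

/-- Convolution on `A_R(G;σ)` twisted by a 2-cocycle `c`. -/
noncomputable def convC {R : Type w} [CommRing R] (c : G → G → Rˣ) (f g : G → R) :
    G → R := fun γ =>
  ∑ᶠ p : G × G,
    if 𝒢.src p.1 = 𝒢.rng p.2 ∧ 𝒢.mul p.1 p.2 = γ then
      (c p.1 p.2 : R) * f p.1 * g p.2 else 0

/-- A continuous `Γ`-grading on `G` (for a discrete group `Γ`). -/
def IsGrading {Γ : Type*} [Group Γ] (c : G → Γ) : Prop :=
  IsLocallyConstant c ∧ ∀ a b, 𝒢.src a = 𝒢.rng b → c (𝒢.mul a b) = c a * c b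

end EtaleGroupoid

/-- An ample groupoid: étale with a basis of compact open bisections. -/
structure AmpleGroupoid (G : Type u) [TopologicalSpace G] extends EtaleGroupoid G where
  ample : TopologicalSpace.IsTopologicalBasis {U : Set G | toEtaleGroupoid.IsCOB U}

/-- A discrete twist `G⁽⁰⁾ × Rˣ → Σ → G` over an ample groupoid `G`. -/
structure DiscreteTwist (R : Type w) [CommRing R] {G : Type u} {S : Type v}
    [TopologicalSpace G] [TopologicalSpace S]
    (𝒢 : AmpleGroupoid G) (𝒮 : EtaleGroupoid S) where
  i : G → Rˣ → S
  q : S → G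
  continuousOn_i : ∀ t : Rˣ, ContinuousOn (fun x => i x t) 𝒢.unitSpace
  continuous_q : Continuous q
  i_injOn : Set.InjOn (fun p : G × Rˣ => i p.1 p.2) (𝒢.unitSpace ×ˢ (Set.univ : Set Rˣ))
  q_surj : Function.Surjective q
  exact' : ∀ x ∈ 𝒢.unitSpace, q ⁻¹' {x} = {σ | ∃ t : Rˣ, σ = i x t}
  i_mul : ∀ x ∈ 𝒢.unitSpace, ∀ s t : Rˣ, 𝒮.mul (i x s) (i x t) = i x (s * t)
  unit_eq : 𝒮.unitSpace = (fun x => i x 1) '' 𝒢.unitSpace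
  q_mul : ∀ a b, 𝒮.src a = 𝒮.rng b → q (𝒮.mul a b) = 𝒢.mul (q a) (q b)
  q_inv : ∀ a, q (𝒮.inv a) = 𝒢.inv (q a)
  q_src : ∀ a, q (𝒮.src a) = 𝒢.src (q a)
  q_rng : ∀ a, q (𝒮.rng a) = 𝒢.rng (q a)
  q_unit_bij : Set.BijOn q 𝒮.unitSpace 𝒢.unitSpace
  central : ∀ (σ : S) (t : Rˣ),
    𝒮.mul (i (𝒢.rng (q σ)) t) σ = 𝒮.mul σ (i (𝒢.src (q σ)) t)
  loc_triv : ∀ α : G, ∃ B : Set G, IsOpen B ∧ α ∈ B ∧ 𝒢.IsBisection B ∧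
    ∃ P : G → S, ContinuousOn P B ∧ (∀ β ∈ B, q (P β) = β) ∧
      (∀ t : Rˣ, ContinuousOn (fun β => 𝒮.mul (i (𝒢.rng β) t) (P β)) B) ∧
      (∀ σ : S, q σ ∈ B →
        ∃! p : G × Rˣ, p.1 ∈ B ∧ 𝒮.mul (i (𝒢.rng p.1) p.2) (P p.1) = σ) ∧
      (∀ t : Rˣ, ∀ V ⊆ B, IsOpen V →
        IsOpen ((fun β => 𝒮.mul (i (𝒢.rng β) t) (P β)) '' V))

namespace DiscreteTwist

variable {R : Type w} [CommRing R] {G : Type u} {S : Type v}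
  [TopologicalSpace G] [TopologicalSpace S]
  {𝒢 : AmpleGroupoid G} {𝒮 : EtaleGroupoid S} (T : DiscreteTwist R 𝒢 𝒮)

/-- The action of `Rˣ` on `Σ`: `t • σ = i(r σ, t) σ`. -/
def act (t : Rˣ) (σ : S) : S := 𝒮.mul (T.i (𝒢.rng (T.q σ)) t) σ

/-- The function `1̃_X` associated to a subset `X ⊆ Σ`. -/
noncomputable def tilde (X : Set S) : S → R := fun σ =>
  if h : ∃ t : Rˣ, σ ∈ T.act t '' X then (((Classical.choose h)⁻¹ : Rˣ) : R) else 0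

/-- Membership in the twisted Steinberg algebra `A_R(G;Σ)`: locally constant,
`Rˣ`-contravariant functions with compact image of the support in `G`. -/
def MemA (f : S → R) : Prop :=
  IsLocallyConstant f ∧
  (∀ (t : Rˣ) (σ : S), f (T.act t σ) = ((t⁻¹ : Rˣ) : R) * f σ) ∧
  IsCompact (T.q '' Function.support f)

/-- A (not necessarily continuous) section of `q`. -/
noncomputable def sec : G → S := Function.surjInv T.q_surj

/-- Convolution on `A_R(G;Σ)`, defined via the section `sec`. -/
noncomputable def conv (f g : S → R) : S → R := fun σ =>
  ∑ᶠ α : G,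
    if 𝒢.rng α = 𝒢.rng (T.q σ) then
      f (T.sec α) * g (𝒮.mul (𝒮.inv (T.sec α)) σ) else 0

end DiscreteTwist

end

/-!
Pick `σ₀` with `g σ₀ ≠ 0`. Local trivialisations of the twist over the ample groupoid `G`
make `Σ` ample as well, so `σ₀` lies in a compact open bisection `B ⊆ Σ_γ`. For a bisection
`B`, the convolution `1̃_{B⁻¹} * g` has the closed form `σ ↦ g (b σ)`, where `b ∈ B` is the
unique element with `s b = r σ` (and `0` if there is none): the scalars of `1̃` and of the
`Rˣ`-contravariance of `g` cancel. This function takes the value `g σ₀ ≠ 0` at the unit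
`s σ₀`, and its support lies in `Σ_ε` because `c(b σ) = γ c(σ)`.
-/

namespace EtaleGroupoid

variable {G : Type*} [TopologicalSpace G] (𝒢 : EtaleGroupoid G)

lemma src_mem_unitSpace (g : G) : 𝒢.src g ∈ 𝒢.unitSpace := ⟨g, rfl⟩

lemma rng_mem_unitSpace (g : G) : 𝒢.rng g ∈ 𝒢.unitSpace := ⟨𝒢.inv g, 𝒢.src_inv g⟩

lemma src_src (g : G) : 𝒢.src (𝒢.src g) = 𝒢.src g := by
  conv_lhs => rw [← 𝒢.inv_mul_self g]
  rw [𝒢.src_mul _ _ (by rw [𝒢.src_inv])]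

lemma rng_src (g : G) : 𝒢.rng (𝒢.src g) = 𝒢.src g := by
  conv_lhs => rw [← 𝒢.inv_mul_self g]
  rw [𝒢.rng_mul _ _ (by rw [𝒢.src_inv]), 𝒢.rng_inv]

lemma src_rng (g : G) : 𝒢.src (𝒢.rng g) = 𝒢.rng g := by
  simpa only [𝒢.src_inv] using 𝒢.src_src (𝒢.inv g)

lemma rng_rng (g : G) : 𝒢.rng (𝒢.rng g) = 𝒢.rng g := by
  simpa only [𝒢.src_inv] using 𝒢.rng_src (𝒢.inv g)

lemma src_unit {u : G} (hu : u ∈ 𝒢.unitSpace) : 𝒢.src u = u := by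
  obtain ⟨g, rfl⟩ := hu
  exact 𝒢.src_src g

lemma rng_unit {u : G} (hu : u ∈ 𝒢.unitSpace) : 𝒢.rng u = u := by
  obtain ⟨g, rfl⟩ := hu
  exact 𝒢.rng_src g

lemma continuous_src : Continuous 𝒢.src := 𝒢.isLocalHomeomorph_src.continuous

lemma continuous_rng : Continuous 𝒢.rng := by
  have h : 𝒢.rng = 𝒢.src ∘ 𝒢.inv := funext fun g => (𝒢.src_inv g).symm
  rw [h]
  exact 𝒢.continuous_src.comp 𝒢.continuous_inv

lemma mul_cancel_left {a b : G} (h : 𝒢.src a = 𝒢.rng b) :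
    𝒢.mul (𝒢.inv a) (𝒢.mul a b) = b := by
  rw [← 𝒢.mul_assoc' _ _ _ (by rw [𝒢.src_inv]) h, 𝒢.inv_mul_self, h, 𝒢.rng_mul_self]

lemma mul_inv_cancel_left {a c : G} (h : 𝒢.rng a = 𝒢.rng c) :
    𝒢.mul a (𝒢.mul (𝒢.inv a) c) = c := by
  rw [← 𝒢.mul_assoc' _ _ _ (by rw [𝒢.rng_inv]) (by rw [𝒢.src_inv, h]),
    𝒢.mul_inv_self, h, 𝒢.rng_mul_self]

lemma inv_eq_of_mul {a b : G} (h : 𝒢.src a = 𝒢.rng b) (h2 : 𝒢.mul a b = 𝒢.rng a) :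
    𝒢.inv a = b := by
  have := 𝒢.mul_cancel_left h
  rw [h2] at this
  rw [← this, ← 𝒢.src_inv, 𝒢.mul_src_self]

lemma inv_mul {a b : G} (h : 𝒢.src a = 𝒢.rng b) :
    𝒢.inv (𝒢.mul a b) = 𝒢.mul (𝒢.inv b) (𝒢.inv a) := by
  have hc : 𝒢.src (𝒢.inv b) = 𝒢.rng (𝒢.inv a) := by rw [𝒢.src_inv, 𝒢.rng_inv, h]
  have h1 : 𝒢.src b = 𝒢.rng (𝒢.mul (𝒢.inv b) (𝒢.inv a)) := by
    rw [𝒢.rng_mul _ _ hc, 𝒢.rng_inv]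
  apply 𝒢.inv_eq_of_mul
  · rw [𝒢.src_mul _ _ h, 𝒢.rng_mul _ _ hc, 𝒢.rng_inv]
  · rw [𝒢.mul_assoc' a b _ h h1, 𝒢.mul_inv_cancel_left (by rw [𝒢.rng_inv, h]),
      𝒢.mul_inv_self, 𝒢.rng_mul _ _ h]

lemma injOn_rng_setInv {B : Set G} (hB : InjOn 𝒢.src B) : InjOn 𝒢.rng (𝒢.setInv B) := by
  rintro _ ⟨a, ha, rfl⟩ _ ⟨b, hb, rfl⟩ h
  rw [𝒢.rng_inv, 𝒢.rng_inv] at h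
  rw [hB ha hb h]

lemma isCompact_setInv {U : Set G} (hU : IsCompact U) : IsCompact (𝒢.setInv U) :=
  hU.image 𝒢.continuous_inv

lemma isCompact_setMul [T2Space G] {U V : Set G} (hU : IsCompact U) (hV : IsCompact V) :
    IsCompact (𝒢.setMul U V) := by
  have hmul : 𝒢.setMul U V = (fun p : G × G => 𝒢.mul p.1 p.2) ''
      (U ×ˢ V ∩ {p | 𝒢.src p.1 = 𝒢.rng p.2}) := by
    ext g
    constructor
    · rintro ⟨a, ha, b, hb, hab, rfl⟩
      exact ⟨(a, b), ⟨⟨ha, hb⟩, hab⟩, rfl⟩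
    · rintro ⟨⟨a, b⟩, ⟨⟨ha, hb⟩, hab⟩, rfl⟩
      exact ⟨a, ha, b, hb, hab, rfl⟩
  rw [hmul]
  have hclosed : IsClosed {p : G × G | 𝒢.src p.1 = 𝒢.rng p.2} :=
    isClosed_eq (𝒢.continuous_src.comp continuous_fst) (𝒢.continuous_rng.comp continuous_snd)
  exact ((hU.prod hV).inter_right hclosed).image_of_continuousOn
    (𝒢.continuousOn_mul.mono inter_subset_right)

lemma exists_continuousOn_src_rightInverse {U : Set G} (hU : IsOpen U) {a : G} (ha : a ∈ U) :
    ∃ V : Set G, IsOpen V ∧ 𝒢.src a ∈ V ∧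
      ∃ φ : G → G, ContinuousOn φ V ∧ ∀ y ∈ V, φ y ∈ U ∧ 𝒢.src (φ y) = y := by
  obtain ⟨e, hae, he⟩ := 𝒢.isLocalHomeomorph_src a
  set e' := e.restrOpen U hU
  have hsrc : 𝒢.src = e' := he
  refine ⟨e'.target, e'.open_target, hsrc ▸ e'.map_source ⟨hae, ha⟩,
    e'.symm, e'.continuousOn_symm, fun y hy => ⟨(e'.map_target hy).2, ?_⟩⟩
  rw [hsrc]
  exact e'.right_inv hy

/-- For a bisection `B` of a twist this is `1̃_{B⁻¹} * f`, see `DiscreteTwist.conv_tilde_setInv`. -/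
noncomputable def leftTranslate {R : Type*} [Zero R] (B : Set G) (f : G → R) (x : G) : R :=
  if h : ∃ b ∈ B, 𝒢.src b = 𝒢.rng x then f (𝒢.mul h.choose x) else 0

variable {𝒢} {R : Type*} [Zero R] {B : Set G} {f : G → R}

lemma leftTranslate_eq (hB : InjOn 𝒢.src B) {b x : G} (hb : b ∈ B) (hbx : 𝒢.src b = 𝒢.rng x) :
    𝒢.leftTranslate B f x = f (𝒢.mul b x) := by
  have h : ∃ b ∈ B, 𝒢.src b = 𝒢.rng x := ⟨b, hb, hbx⟩
  rw [leftTranslate, dif_pos h, hB h.choose_spec.1 hb (h.choose_spec.2.trans hbx.symm)]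

lemma leftTranslate_eq_zero {x : G} (h : ¬ ∃ b ∈ B, 𝒢.src b = 𝒢.rng x) :
    𝒢.leftTranslate B f x = 0 :=
  dif_neg h

lemma exists_of_leftTranslate_ne_zero {x : G} (h : 𝒢.leftTranslate B f x ≠ 0) :
    ∃ b ∈ B, 𝒢.src b = 𝒢.rng x ∧ f (𝒢.mul b x) ≠ 0 := by
  by_cases hx : ∃ b ∈ B, 𝒢.src b = 𝒢.rng x
  · rw [leftTranslate, dif_pos hx] at h
    exact ⟨_, hx.choose_spec.1, hx.choose_spec.2, h⟩
  · exact absurd (leftTranslate_eq_zero hx) h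

lemma isLocallyConstant_leftTranslate [T2Space G] (hB : 𝒢.IsCOB B) (hf : IsLocallyConstant f) :
    IsLocallyConstant (𝒢.leftTranslate B f) := by
  rw [IsLocallyConstant.iff_exists_open]
  intro x
  by_cases hx : ∃ b ∈ B, 𝒢.src b = 𝒢.rng x
  · obtain ⟨b, hb, hbx⟩ := hx
    obtain ⟨V, hV, hbV, φ, hφ, hφV⟩ := 𝒢.exists_continuousOn_src_rightInverse hB.2.1 hb
    set W := 𝒢.rng ⁻¹' V
    set m : G → G := fun y => 𝒢.mul (φ (𝒢.rng y)) y
    have hxW : x ∈ W := by rw [mem_preimage, ← hbx]; exact hbV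
    have hm : ContinuousOn m W :=
      𝒢.continuousOn_mul.comp ((hφ.comp 𝒢.continuous_rng.continuousOn fun _ hy => hy).prodMk
        continuousOn_id) fun y hy => (hφV _ hy).2
    have hfm : ∀ y ∈ W, 𝒢.leftTranslate B f y = f (m y) := fun y hy =>
      leftTranslate_eq hB.2.2.1 (hφV _ hy).1 (hφV _ hy).2
    refine ⟨W ∩ m ⁻¹' {y | f y = f (m x)},
      hm.isOpen_inter_preimage (hV.preimage 𝒢.continuous_rng) (hf.isOpen_fiber _),
      ⟨hxW, rfl⟩, fun y hy => ?_⟩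
    rw [hfm y hy.1, hfm x hxW]
    exact hy.2
  · have hclosed : IsClosed (𝒢.src '' B) := (hB.1.image 𝒢.continuous_src).isClosed
    refine ⟨𝒢.rng ⁻¹' (𝒢.src '' B)ᶜ, hclosed.isOpen_compl.preimage 𝒢.continuous_rng,
      fun ⟨b, hb, hbx⟩ => hx ⟨b, hb, hbx⟩, fun y hy => ?_⟩
    rw [leftTranslate_eq_zero fun ⟨b, hb, hby⟩ => hy ⟨b, hb, hby⟩, leftTranslate_eq_zero hx]

lemma support_leftTranslate_subset {Γ : Type*} [Group Γ] {c : G → Γ} (hc : 𝒢.IsGrading c)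
    {γ : Γ} (hB : B ⊆ c ⁻¹' {γ}) (hf : support f ⊆ c ⁻¹' {γ}) :
    support (𝒢.leftTranslate B f) ⊆ c ⁻¹' {1} := by
  intro x hx
  obtain ⟨b, hb, hbx, hfbx⟩ := exists_of_leftTranslate_ne_zero hx
  have hcb : c b = γ := hB hb
  have h : c (𝒢.mul b x) = γ := hf hfbx
  rw [hc.2 _ _ hbx, hcb, mul_eq_left] at h
  exact h

end EtaleGroupoid

namespace DiscreteTwist

variable {R : Type*} [CommRing R] {G S : Type*} [TopologicalSpace G] [TopologicalSpace S]
  {𝒢 : AmpleGroupoid G} {𝒮 : EtaleGroupoid S} (T : DiscreteTwist R 𝒢 𝒮)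

lemma q_i {x : G} (hx : x ∈ 𝒢.unitSpace) (t : Rˣ) : T.q (T.i x t) = x := by
  have h : T.i x t ∈ T.q ⁻¹' {x} := by rw [T.exact' x hx]; exact ⟨t, rfl⟩
  exact h

lemma src_eq_rng_iff {a b : S} : 𝒮.src a = 𝒮.rng b ↔ 𝒢.src (T.q a) = 𝒢.rng (T.q b) :=
  ⟨fun h => by rw [← T.q_src, h, T.q_rng], fun h => T.q_unit_bij.injOn
    (𝒮.src_mem_unitSpace a) (𝒮.rng_mem_unitSpace b) (by rw [T.q_src, T.q_rng, h])⟩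

lemma src_eq_src_iff {a b : S} : 𝒮.src a = 𝒮.src b ↔ 𝒢.src (T.q a) = 𝒢.src (T.q b) :=
  ⟨fun h => by rw [← T.q_src, h, T.q_src], fun h => T.q_unit_bij.injOn
    (𝒮.src_mem_unitSpace a) (𝒮.src_mem_unitSpace b) (by rw [T.q_src, T.q_src, h])⟩

lemma rng_eq_rng_iff {a b : S} : 𝒮.rng a = 𝒮.rng b ↔ 𝒢.rng (T.q a) = 𝒢.rng (T.q b) :=
  ⟨fun h => by rw [← T.q_rng, h, T.q_rng], fun h => T.q_unit_bij.injOn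
    (𝒮.rng_mem_unitSpace a) (𝒮.rng_mem_unitSpace b) (by rw [T.q_rng, T.q_rng, h])⟩

lemma injOn_src_iff {X : Set S} : InjOn 𝒮.src X ↔ InjOn (𝒢.src ∘ T.q) X := by
  simp only [InjOn, comp_apply, T.src_eq_src_iff]

lemma injOn_rng_iff {X : Set S} : InjOn 𝒮.rng X ↔ InjOn (𝒢.rng ∘ T.q) X := by
  simp only [InjOn, comp_apply, T.rng_eq_rng_iff]

lemma injOn_q_of_injOn_rng {X : Set S} (hX : InjOn 𝒮.rng X) : InjOn T.q X :=
  fun _ ha _ hb h => hX ha hb (T.rng_eq_rng_iff.2 (by rw [h]))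

lemma src_i_rng (t : Rˣ) (σ : S) : 𝒮.src (T.i (𝒢.rng (T.q σ)) t) = 𝒮.rng σ :=
  T.src_eq_rng_iff.2 (by rw [T.q_i (𝒢.rng_mem_unitSpace _) t, 𝒢.src_rng])

lemma q_act (t : Rˣ) (σ : S) : T.q (T.act t σ) = T.q σ := by
  rw [act, T.q_mul _ _ (T.src_i_rng t σ), T.q_i (𝒢.rng_mem_unitSpace _), 𝒢.rng_mul_self]

lemma rng_act (t : Rˣ) (σ : S) : 𝒮.rng (T.act t σ) = 𝒮.rng σ :=
  T.rng_eq_rng_iff.2 (by rw [T.q_act])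

lemma i_inj {x : G} (hx : x ∈ 𝒢.unitSpace) {t t' : Rˣ} (h : T.i x t = T.i x t') : t = t' :=
  congrArg Prod.snd (T.i_injOn (x₁ := (x, t)) (x₂ := (x, t')) ⟨hx, mem_univ _⟩ ⟨hx, mem_univ _⟩ h)

lemma inv_i {x : G} (hx : x ∈ 𝒢.unitSpace) (t : Rˣ) : 𝒮.inv (T.i x t) = T.i x t⁻¹ := by
  apply 𝒮.inv_eq_of_mul
  · exact T.src_eq_rng_iff.2 (by rw [T.q_i hx, T.q_i hx, 𝒢.src_unit hx, 𝒢.rng_unit hx])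
  · rw [T.i_mul x hx t t⁻¹, mul_inv_cancel]
    refine T.q_unit_bij.injOn ?_ (𝒮.rng_mem_unitSpace _) (by rw [T.q_i hx, T.q_rng, T.q_i hx,
      𝒢.rng_unit hx])
    rw [T.unit_eq]
    exact ⟨x, hx, rfl⟩

lemma exists_eq_act_of_q_eq {σ τ : S} (h : T.q σ = T.q τ) : ∃ t : Rˣ, σ = T.act t τ := by
  have hc : 𝒮.src σ = 𝒮.rng (𝒮.inv τ) := T.src_eq_rng_iff.2 (by rw [T.q_inv, 𝒢.rng_inv, h])
  have hm : 𝒮.mul σ (𝒮.inv τ) ∈ T.q ⁻¹' {𝒢.rng (T.q σ)} := by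
    rw [mem_preimage, T.q_mul _ _ hc, T.q_inv, ← h, 𝒢.mul_inv_self, mem_singleton_iff]
  rw [T.exact' _ (𝒢.rng_mem_unitSpace _)] at hm
  obtain ⟨t, ht⟩ := hm
  have hst : 𝒮.src τ = 𝒮.src σ := T.src_eq_src_iff.2 (by rw [h])
  refine ⟨t, ?_⟩
  rw [act, ← h, ← ht, 𝒮.mul_assoc' σ (𝒮.inv τ) τ hc (by rw [𝒮.src_inv]), 𝒮.inv_mul_self, hst,
    𝒮.mul_src_self]

lemma act_inj {t t' : Rˣ} {σ : S} (h : T.act t σ = T.act t' σ) : t = t' := by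
  have key : ∀ s : Rˣ, 𝒮.mul (T.act s σ) (𝒮.inv σ) = T.i (𝒢.rng (T.q σ)) s := by
    intro s
    rw [act, 𝒮.mul_assoc' _ σ (𝒮.inv σ) (T.src_i_rng s σ) (𝒮.rng_inv σ).symm, 𝒮.mul_inv_self,
      ← T.src_i_rng s σ, 𝒮.mul_src_self]
  exact T.i_inj (𝒢.rng_mem_unitSpace _) (by rw [← key t, ← key t', h])

lemma inv_act (t : Rˣ) (σ : S) : 𝒮.inv (T.act t σ) = T.act t⁻¹ (𝒮.inv σ) := by
  rw [act, act, 𝒮.inv_mul (T.src_i_rng t σ), T.inv_i (𝒢.rng_mem_unitSpace _) t,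
    T.central (𝒮.inv σ) t⁻¹, T.q_inv, 𝒢.src_inv]

lemma mul_act {a b : S} (h : 𝒮.src a = 𝒮.rng b) (t : Rˣ) :
    𝒮.mul a (T.act t b) = T.act t (𝒮.mul a b) := by
  have hq : 𝒢.src (T.q a) = 𝒢.rng (T.q b) := T.src_eq_rng_iff.1 h
  have h1 : 𝒮.src a = 𝒮.rng (T.i (𝒢.rng (T.q b)) t) :=
    T.src_eq_rng_iff.2 (by rw [T.q_i (𝒢.rng_mem_unitSpace _), 𝒢.rng_rng, hq])
  rw [act, act, ← 𝒮.mul_assoc' a _ b h1 (T.src_i_rng t b), ← hq, ← T.central a t,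
    𝒮.mul_assoc' _ a b (T.src_i_rng t a) h, T.q_mul a b h, 𝒢.rng_mul _ _ hq]

lemma act_mul {a b : S} (h : 𝒮.src a = 𝒮.rng b) (t : Rˣ) :
    𝒮.mul (T.act t a) b = T.act t (𝒮.mul a b) := by
  rw [act, act, 𝒮.mul_assoc' _ a b (T.src_i_rng t a) h, T.q_mul a b h,
    𝒢.rng_mul _ _ (T.src_eq_rng_iff.1 h)]

lemma tilde_act {X : Set S} (hX : InjOn T.q X) {x : S} (hx : x ∈ X) (s : Rˣ) :
    T.tilde X (T.act s x) = ((s⁻¹ : Rˣ) : R) := by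
  have h : ∃ t : Rˣ, T.act s x ∈ T.act t '' X := ⟨s, x, hx, rfl⟩
  obtain ⟨y, hy, hys⟩ := h.choose_spec
  obtain rfl : y = x := hX hy hx (by simpa only [T.q_act] using congrArg T.q hys)
  simp only [tilde, dif_pos h, T.act_inj hys]

variable {B : Set S} {g : S → R}

theorem conv_tilde_setInv (hB : InjOn 𝒮.src B)
    (hg : ∀ (t : Rˣ) (σ : S), g (T.act t σ) = ((t⁻¹ : Rˣ) : R) * g σ) :
    T.conv (T.tilde (𝒮.setInv B)) g = 𝒮.leftTranslate B g := by
  funext σ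
  set term : G → R := fun α => if 𝒢.rng α = 𝒢.rng (T.q σ) then
    T.tilde (𝒮.setInv B) (T.sec α) * g (𝒮.mul (𝒮.inv (T.sec α)) σ) else 0
  change ∑ᶠ α, term α = _
  have hsec : ∀ α, T.q (T.sec α) = α := surjInv_eq T.q_surj
  have hterm_ne : ∀ α, term α ≠ 0 → ∃ b ∈ B, 𝒮.src b = 𝒮.rng σ ∧ α = 𝒢.inv (T.q b) := by
    intro α hα
    by_cases hr : 𝒢.rng α = 𝒢.rng (T.q σ)
    · simp only [term, if_pos hr] at hα
      obtain ⟨t, _, ⟨b, hb, rfl⟩, hbt⟩ : ∃ t : Rˣ, T.sec α ∈ T.act t '' 𝒮.setInv B := by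
        by_contra h
        exact left_ne_zero_of_mul hα (dif_neg h)
      have hα' : α = 𝒢.inv (T.q b) := by rw [← hsec α, ← hbt, T.q_act, T.q_inv]
      exact ⟨b, hb, T.src_eq_rng_iff.2 (by rw [← hr, hα', 𝒢.rng_inv]), hα'⟩
    · simp only [term, if_neg hr, ne_eq, not_true_eq_false] at hα
  have hterm : ∀ b ∈ B, 𝒮.src b = 𝒮.rng σ → term (𝒢.inv (T.q b)) = g (𝒮.mul b σ) := by
    intro b hb hbσ
    obtain ⟨s, hs⟩ := T.exists_eq_act_of_q_eq
      (show T.q (T.sec (𝒢.inv (T.q b))) = T.q (𝒮.inv b) by rw [hsec, T.q_inv])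
    simp only [term, 𝒢.rng_inv, (T.src_eq_rng_iff).1 hbσ, if_true]
    rw [hs, T.tilde_act (T.injOn_q_of_injOn_rng (𝒮.injOn_rng_setInv hB)) ⟨b, hb, rfl⟩,
      T.inv_act, 𝒮.inv_inv, T.act_mul hbσ, hg, inv_inv, ← mul_assoc, ← Units.val_mul,
      inv_mul_cancel, Units.val_one, one_mul]
  by_cases h : ∃ b ∈ B, 𝒮.src b = 𝒮.rng σ
  · obtain ⟨b, hb, hbσ⟩ := h
    rw [EtaleGroupoid.leftTranslate_eq hB hb hbσ, ← hterm b hb hbσ]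
    refine finsum_eq_single term _ fun α hα => by_contra fun hne => hα ?_
    obtain ⟨b', hb', hb'σ, rfl⟩ := hterm_ne α hne
    rw [hB hb' hb (hb'σ.trans hbσ.symm)]
  · rw [EtaleGroupoid.leftTranslate_eq_zero h]
    refine finsum_eq_zero_of_forall_eq_zero fun α => by_contra fun hne => h ?_
    obtain ⟨b, hb, hbσ, -⟩ := hterm_ne α hne
    exact ⟨b, hb, hbσ⟩

lemma leftTranslate_act (hB : InjOn 𝒮.src B)
    (hg : ∀ (t : Rˣ) (σ : S), g (T.act t σ) = ((t⁻¹ : Rˣ) : R) * g σ) (t : Rˣ) (σ : S) :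
    𝒮.leftTranslate B g (T.act t σ) = ((t⁻¹ : Rˣ) : R) * 𝒮.leftTranslate B g σ := by
  by_cases h : ∃ b ∈ B, 𝒮.src b = 𝒮.rng σ
  · obtain ⟨b, hb, hbσ⟩ := h
    rw [EtaleGroupoid.leftTranslate_eq hB hb (hbσ.trans (T.rng_act t σ).symm),
      EtaleGroupoid.leftTranslate_eq hB hb hbσ, T.mul_act hbσ, hg]
  · rw [EtaleGroupoid.leftTranslate_eq_zero h,
      EtaleGroupoid.leftTranslate_eq_zero (by simpa only [T.rng_act] using h), mul_zero]

lemma image_q_support_leftTranslate (hB : InjOn 𝒮.src B) :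
    T.q '' support (𝒮.leftTranslate B g) =
      𝒢.setMul (𝒢.setInv (T.q '' B)) (T.q '' support g) := by
  ext α
  constructor
  · rintro ⟨σ, hσ, rfl⟩
    obtain ⟨b, hb, hbσ, hgbσ⟩ := EtaleGroupoid.exists_of_leftTranslate_ne_zero hσ
    refine ⟨𝒢.inv (T.q b), ⟨T.q b, ⟨b, hb, rfl⟩, rfl⟩, T.q (𝒮.mul b σ), ⟨_, hgbσ, rfl⟩, ?_, ?_⟩
    · rw [𝒢.src_inv, ← T.q_rng, ← T.q_rng, 𝒮.rng_mul _ _ hbσ]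
    · rw [T.q_mul _ _ hbσ, 𝒢.mul_cancel_left (T.src_eq_rng_iff.1 hbσ)]
  · rintro ⟨_, ⟨_, ⟨b, hb, rfl⟩, rfl⟩, _, ⟨τ, hτ, rfl⟩, hbτ, rfl⟩
    have hbτ' : 𝒮.src (𝒮.inv b) = 𝒮.rng τ := T.src_eq_rng_iff.2 (by rwa [T.q_inv])
    have hb' : 𝒮.src b = 𝒮.rng (𝒮.mul (𝒮.inv b) τ) := by rw [𝒮.rng_mul _ _ hbτ', 𝒮.rng_inv]
    refine ⟨𝒮.mul (𝒮.inv b) τ, ?_, by rw [T.q_mul _ _ hbτ', T.q_inv]⟩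
    rw [mem_support, EtaleGroupoid.leftTranslate_eq hB hb hb',
      𝒮.mul_inv_cancel_left (by rw [← 𝒮.src_inv]; exact hbτ')]
    exact hτ

lemma memA_leftTranslate [T2Space G] [T2Space S] (hB : 𝒮.IsCOB B) (hg : T.MemA g) :
    T.MemA (𝒮.leftTranslate B g) := by
  refine ⟨EtaleGroupoid.isLocallyConstant_leftTranslate hB hg.1,
    T.leftTranslate_act hB.2.2.1 hg.2.1, ?_⟩
  rw [T.image_q_support_leftTranslate hB.2.2.1]
  exact 𝒢.isCompact_setMul (𝒢.isCompact_setInv (hB.1.image T.continuous_q)) hg.2.2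

theorem isTopologicalBasis_isCOB (T : DiscreteTwist R 𝒢 𝒮) :
    IsTopologicalBasis {U : Set S | 𝒮.IsCOB U} := by
  refine isTopologicalBasis_of_isOpen_of_nhds (fun U hU => hU.2.1) fun σ W hσ hW => ?_
  obtain ⟨B₀, hB₀, hσB₀, -, P, -, hPq, hM, -, hMopen⟩ := T.loc_triv (T.q σ)
  obtain ⟨t, ht⟩ := T.exists_eq_act_of_q_eq (hPq _ hσB₀).symm
  set M : G → S := fun β => 𝒮.mul (T.i (𝒢.rng β) t) (P β)
  have hqM : ∀ β ∈ B₀, T.q (M β) = β := fun β hβ => by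
    have h := T.q_act t (P β)
    rwa [act, hPq β hβ] at h
  have hMσ : M (T.q σ) = σ := by
    conv_rhs => rw [ht, act, hPq _ hσB₀]
  obtain ⟨BG, hBG, hσBG, hBGsub⟩ := 𝒢.ample.exists_subset_of_mem_open
    (show T.q σ ∈ B₀ ∩ M ⁻¹' W from ⟨hσB₀, by rwa [mem_preimage, hMσ]⟩)
    ((hM t).isOpen_inter_preimage hB₀ hW)
  have hBGB₀ : BG ⊆ B₀ := fun β hβ => (hBGsub hβ).1
  have hlift : ∀ φ : G → G, InjOn φ BG → InjOn (φ ∘ T.q) (M '' BG) := fun φ hφ =>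
    InjOn.image_of_comp (hφ.congr fun β hβ => by simp only [comp_apply, hqM β (hBGB₀ hβ)])
  refine ⟨M '' BG, ⟨hBG.1.image_of_continuousOn ((hM t).mono hBGB₀),
    hMopen t BG hBGB₀ hBG.2.1, T.injOn_src_iff.2 (hlift _ hBG.2.2.1),
    T.injOn_rng_iff.2 (hlift _ hBG.2.2.2)⟩, ⟨T.q σ, hσBG, hMσ⟩, ?_⟩
  rintro _ ⟨β, hβ, rfl⟩
  exact (hBGsub hβ).2

end DiscreteTwist

theorem stmt_13_general {R : Type*} [CommRing R] {G S : Type*}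
    [TopologicalSpace G] [TopologicalSpace S] [T2Space G] [T2Space S]
    {𝒢 : AmpleGroupoid G} {𝒮 : EtaleGroupoid S} (T : DiscreteTwist R 𝒢 𝒮)
    {Γ : Type*} [Group Γ]
    (cG : G → Γ) (cS : S → Γ)
    (hcS : 𝒮.IsGrading cS)
    (hcomm : ∀ σ : S, cS σ = cG (T.q σ))
    (γ : Γ) (g : S → R) (hg : T.MemA g)
    (hhom : T.q '' Function.support g ⊆ cG ⁻¹' {γ}) (hne : g ≠ 0) :
    ∃ B : Set S, 𝒮.IsCOB B ∧ B ⊆ cS ⁻¹' {γ} ∧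
      ∃ f : S → R, f = T.conv (T.tilde (𝒮.setInv B)) g ∧
        f ≠ 0 ∧ T.MemA f ∧
        (Function.support f ∩ 𝒮.unitSpace).Nonempty ∧
        Function.support f ⊆ cS ⁻¹' {1} ∧
        T.q '' Function.support f ⊆ cG ⁻¹' {1} := by
  obtain ⟨σ₀, hσ₀⟩ : ∃ σ₀, g σ₀ ≠ 0 := Function.ne_iff.1 hne
  have hgγ : support g ⊆ cS ⁻¹' {γ} := fun σ hσ => by
    rw [mem_preimage, hcomm]
    exact hhom ⟨σ, hσ, rfl⟩
  obtain ⟨B, hB, hσ₀B, hBγ⟩ :=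
    T.isTopologicalBasis_isCOB.exists_subset_of_mem_open (hgγ hσ₀) (hcS.1.isOpen_fiber γ)
  have hF₀ : 𝒮.leftTranslate B g (𝒮.src σ₀) = g σ₀ := by
    rw [EtaleGroupoid.leftTranslate_eq hB.2.2.1 hσ₀B (𝒮.rng_src σ₀).symm, 𝒮.mul_src_self]
  have hsupp := 𝒮.support_leftTranslate_subset hcS hBγ hgγ
  refine ⟨B, hB, hBγ, _, T.conv_tilde_setInv hB.2.2.1 hg.2.1 |>.symm, fun h => hσ₀ ?_,
    T.memA_leftTranslate hB hg, ⟨_, by rwa [mem_support, hF₀], σ₀, rfl⟩, hsupp, ?_⟩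
  · rw [← hF₀, h, Pi.zero_apply]
  · rintro _ ⟨σ, hσ, rfl⟩
    rw [mem_preimage, ← hcomm]
    exact hsupp hσ

/-- for a `Γ`-graded discrete `R`-twist and a nonzero
homogeneous `g_γ ∈ A_R(G;Σ)_γ`, there is a compact open bisection `B ⊆ Σ_γ`
such that `f = 1̃_{B⁻¹} * g_γ` is a nonzero element of `A_R(G_ε;Σ_ε)` whose
support meets `Σ⁽⁰⁾` and is contained in `Σ_ε`. -/
theorem stmt_13 {R : Type*} [CommRing R] {G S : Type*}
    [TopologicalSpace G] [TopologicalSpace S] [T2Space G] [T2Space S]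
    {𝒢 : AmpleGroupoid G} {𝒮 : EtaleGroupoid S} (T : DiscreteTwist R 𝒢 𝒮)
    {Γ : Type*} [Group Γ]
    (cG : G → Γ) (cS : S → Γ)
    (hcG : 𝒢.IsGrading cG) (hcS : 𝒮.IsGrading cS)
    (hcomm : ∀ σ : S, cS σ = cG (T.q σ))
    (γ : Γ) (g : S → R) (hg : T.MemA g)
    (hhom : T.q '' Function.support g ⊆ cG ⁻¹' {γ}) (hne : g ≠ 0) :
    ∃ B : Set S, 𝒮.IsCOB B ∧ B ⊆ cS ⁻¹' {γ} ∧
      ∃ f : S → R, f = T.conv (T.tilde (𝒮.setInv B)) g ∧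
        f ≠ 0 ∧ T.MemA f ∧
        (Function.support f ∩ 𝒮.unitSpace).Nonempty ∧
        Function.support f ⊆ cS ⁻¹' {1} ∧
        T.q '' Function.support f ⊆ cG ⁻¹' {1} :=
  stmt_13_general T cG cS hcS hcomm γ g hg hhom hne
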